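/- Suppose (z_n) ⊂ D is a sequence such that for every sequence (a_n) ∈ c₀ there exists f ∈ H∞ with f(z_n) = a_n for all n. Then there is a nonzero f ∈ H∞ vanishing at z_n for all n ≥ 2, and consequently (z_n) satisfies the Blaschke condition Σ_{n≥1}(1-|z_n|) < ∞. -/

import Mathlib

/-!
Interpolating the sequence `1, 0, 0, …` gives a bounded analytic `f` with `f z₀ = 1` and
`f zₙ = 0` for `n ≥ 1`; interpolating `(2⁻ⁿ)` shows that the `zₙ` are distinct. Dividing a
bounded analytic function by the Blaschke factor `(w - a) / (1 - conj a * w)` of one of its zeros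
does not increase its sup norm (maximum principle on the circles `|w| = r`, where the factor has
modulus at least `(r - |a|) / (1 - |a| r) → 1`). Hence, with `bₙ` the factor of `zₙ`,
`|f z₀| ≤ C ∏ |bₙ(z₀)|` over every finite set of zeros, so the partial products of `∏ |bₙ(z₀)|`
stay bounded below, `∑ (1 - |bₙ(z₀)|) < ∞`, and `1 - |zₙ| ≤ 8 (1 - |bₙ(z₀)|) / (1 - |z₀|²)`.
-/

open Metric Filter Set Topology ComplexConjugate

theorem summable_one_sub_of_forall_le_prod {ι : Type*} {q : ι → ℝ} (hq0 : ∀ i, 0 ≤ q i)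
    (hq1 : ∀ i, q i ≤ 1) {c : ℝ} (hc : 0 < c) (h : ∀ u : Finset ι, c ≤ ∏ i ∈ u, q i) :
    Summable fun i ↦ 1 - q i := by
  refine summable_of_sum_le (c := -Real.log c) (fun i ↦ sub_nonneg.2 (hq1 i)) fun u ↦ ?_
  have hexp : c ≤ Real.exp (-∑ i ∈ u, (1 - q i)) := by
    rw [← Finset.sum_neg_distrib, Real.exp_sum]
    refine (h u).trans (Finset.prod_le_prod (fun i _ ↦ hq0 i) fun i _ ↦ ?_)
    linarith [Real.add_one_le_exp (-(1 - q i))]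
  linarith [(Real.log_le_iff_le_exp hc).2 hexp]

namespace Complex

noncomputable def blaschkeFactor (a w : ℂ) : ℂ := (w - a) / (1 - conj a * w)

theorem norm_one_sub_conj_mul_sq_sub_norm_sub_sq (a w : ℂ) :
    ‖1 - conj a * w‖ ^ 2 - ‖w - a‖ ^ 2 = (1 - ‖a‖ ^ 2) * (1 - ‖w‖ ^ 2) := by
  simp only [← normSq_eq_norm_sq, normSq_apply, sub_re, sub_im, mul_re, mul_im, conj_re,
    conj_im, one_re, one_im]
  ring

theorem norm_one_sub_conj_mul_pos {a w : ℂ} (ha : ‖a‖ < 1) (hw : ‖w‖ ≤ 1) :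
    0 < ‖1 - conj a * w‖ := by
  have : ‖conj a * w‖ < 1 := by
    rw [norm_mul, norm_conj]
    nlinarith [norm_nonneg a, norm_nonneg w]
  calc 0 < 1 - ‖conj a * w‖ := by linarith
    _ ≤ ‖1 - conj a * w‖ := by simpa using norm_sub_norm_le (1 : ℂ) (conj a * w)

theorem norm_sub_le_norm_one_sub_conj_mul {a w : ℂ} (ha : ‖a‖ < 1) (hw : ‖w‖ < 1) :
    ‖w - a‖ ≤ ‖1 - conj a * w‖ := by
  have hid := norm_one_sub_conj_mul_sq_sub_norm_sub_sq a w
  have : 0 ≤ (1 - ‖a‖ ^ 2) * (1 - ‖w‖ ^ 2) :=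
    mul_nonneg (by nlinarith [norm_nonneg a]) (by nlinarith [norm_nonneg w])
  exact (pow_le_pow_iff_left₀ (norm_nonneg _) (norm_nonneg _) two_ne_zero).1 (by linarith)

theorem norm_blaschkeFactor_le_one {a w : ℂ} (ha : ‖a‖ < 1) (hw : ‖w‖ < 1) :
    ‖blaschkeFactor a w‖ ≤ 1 := by
  rw [blaschkeFactor, norm_div, div_le_one (norm_one_sub_conj_mul_pos ha hw.le)]
  exact norm_sub_le_norm_one_sub_conj_mul ha hw

theorem blaschkeFactor_ne_zero {a w : ℂ} (ha : ‖a‖ < 1) (hw : ‖w‖ < 1) (hne : w ≠ a) :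
    blaschkeFactor a w ≠ 0 :=
  div_ne_zero (sub_ne_zero.2 hne) (norm_pos_iff.1 (norm_one_sub_conj_mul_pos ha hw.le))

theorem one_sub_norm_mul_le_one_sub_norm_blaschkeFactor {a w : ℂ} (ha : ‖a‖ < 1)
    (hw : ‖w‖ < 1) :
    (1 - ‖a‖) * (1 - ‖w‖ ^ 2) ≤ 8 * (1 - ‖blaschkeFactor a w‖) := by
  have hpos := norm_one_sub_conj_mul_pos ha hw.le
  have hid := norm_one_sub_conj_mul_sq_sub_norm_sub_sq a w
  have hY : ‖1 - conj a * w‖ ≤ 2 := by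
    have := norm_sub_le (1 : ℂ) (conj a * w)
    rw [norm_one, norm_mul, norm_conj] at this
    nlinarith [norm_nonneg a, norm_nonneg w]
  have hXY := norm_sub_le_norm_one_sub_conj_mul ha hw
  have hD : (1 - ‖a‖) * (1 - ‖w‖ ^ 2) ≤ (1 - ‖a‖ ^ 2) * (1 - ‖w‖ ^ 2) :=
    mul_le_mul_of_nonneg_right (by nlinarith [norm_nonneg a]) (by nlinarith [norm_nonneg w])
  have hD0 : 0 ≤ (1 - ‖a‖) * (1 - ‖w‖ ^ 2) :=
    mul_nonneg (by linarith) (by nlinarith [norm_nonneg w])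
  rw [blaschkeFactor, norm_div, one_sub_div hpos.ne', mul_div_assoc', le_div_iff₀ hpos]
  -- with `X = ‖w - a‖ ≤ Y = ‖1 - conj a * w‖ ≤ 2`: `Y² - X² = (Y - X) (Y + X) ≤ 4 (Y - X)`
  nlinarith [mul_le_mul_of_nonneg_left hY hD0, norm_nonneg (w - a)]

theorem div_le_norm_blaschkeFactor_of_norm_eq {a ζ : ℂ} {r : ℝ} (hζ : ‖ζ‖ = r) (ha : ‖a‖ < r)
    (hr : r ≤ 1) :
    (r - ‖a‖) / (1 - ‖a‖ * r) ≤ ‖blaschkeFactor a ζ‖ := by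
  have ha1 : ‖a‖ < 1 := ha.trans_le hr
  have hY := norm_one_sub_conj_mul_pos ha1 (hζ.trans_le hr)
  have hid := norm_one_sub_conj_mul_sq_sub_norm_sub_sq a ζ
  have hX : r - ‖a‖ ≤ ‖ζ - a‖ := hζ ▸ norm_sub_norm_le ζ a
  have hD : 0 ≤ (1 - ‖a‖ ^ 2) * (1 - r ^ 2) :=
    mul_nonneg (by nlinarith [norm_nonneg a]) (by nlinarith [norm_nonneg a])
  have hXsq : (r - ‖a‖) ^ 2 ≤ ‖ζ - a‖ ^ 2 := pow_le_pow_left₀ (by linarith) hX 2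
  rw [hζ] at hid
  have hden : 0 < 1 - ‖a‖ * r := by nlinarith [norm_nonneg a]
  rw [blaschkeFactor, norm_div, div_le_div_iff₀ hden hY]
  refine (pow_le_pow_iff_left₀ (mul_nonneg (by linarith) hY.le)
    (mul_nonneg (norm_nonneg _) hden.le) two_ne_zero).1 ?_
  nlinarith [mul_le_mul_of_nonneg_right hXsq hD]

theorem norm_le_of_forall_sphere_norm_le_of_tendsto {g : ℂ → ℂ}
    (hg : DifferentiableOn ℂ g (ball 0 1)) {B : ℝ → ℝ} {C ρ : ℝ} (hρ : ρ < 1)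
    (hB : Tendsto B (𝓝[<] 1) (𝓝 C))
    (hbound : ∀ r ∈ Ioo ρ 1, ∀ ζ ∈ sphere (0 : ℂ) r, ‖g ζ‖ ≤ B r)
    {w : ℂ} (hw : w ∈ ball (0 : ℂ) 1) :
    ‖g w‖ ≤ C := by
  rw [mem_ball_zero_iff] at hw
  refine ge_of_tendsto hB ?_
  filter_upwards [Ioo_mem_nhdsLT (max_lt hρ hw)] with r ⟨hr, hr1⟩
  have hr0 : r ≠ 0 := ((norm_nonneg w).trans_lt (le_max_right ρ _ |>.trans_lt hr)).ne'
  refine norm_le_of_forall_mem_frontier_norm_le isBounded_ball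
    (hg.diffContOnCl_ball (closedBall_subset_ball hr1)) ?_ ?_
  · rw [frontier_ball 0 hr0]
    exact hbound r ⟨(le_max_left _ _).trans_lt hr, hr1⟩
  · exact subset_closure (mem_ball_zero_iff.2 ((le_max_right ρ _).trans_lt hr))

theorem exists_eq_blaschkeFactor_mul {f : ℂ → ℂ} (hf : DifferentiableOn ℂ f (ball 0 1))
    {C : ℝ} (hC : ∀ w ∈ ball (0 : ℂ) 1, ‖f w‖ ≤ C) {a : ℂ} (ha : a ∈ ball (0 : ℂ) 1)
    (hfa : f a = 0) :
    ∃ g : ℂ → ℂ, DifferentiableOn ℂ g (ball 0 1) ∧ (∀ w ∈ ball (0 : ℂ) 1, ‖g w‖ ≤ C) ∧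
      ∀ w ∈ ball (0 : ℂ) 1, f w = blaschkeFactor a w * g w := by
  rw [mem_ball_zero_iff] at ha
  set g : ℂ → ℂ := fun w ↦ dslope f a w * (1 - conj a * w)
  have hfactor : ∀ w ∈ ball (0 : ℂ) 1, f w = blaschkeFactor a w * g w := by
    intro w hw
    have hY := norm_pos_iff.1 (norm_one_sub_conj_mul_pos ha (mem_ball_zero_iff.1 hw).le)
    have hslope := sub_smul_dslope f a w
    rw [hfa, sub_zero, smul_eq_mul] at hslope
    rw [blaschkeFactor, div_mul_eq_mul_div, eq_div_iff hY, ← hslope]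
    ring
  have hg : DifferentiableOn ℂ g (ball 0 1) :=
    ((differentiableOn_dslope (isOpen_ball.mem_nhds (mem_ball_zero_iff.2 ha))).2
      hf).mul (by fun_prop)
  have hB : Tendsto (fun r : ℝ ↦ C / ((r - ‖a‖) / (1 - ‖a‖ * r))) (𝓝[<] 1) (𝓝 C) := by
    have hne : 1 - ‖a‖ ≠ 0 := (sub_pos.2 ha).ne'
    have hcont : ContinuousAt (fun r : ℝ ↦ C / ((r - ‖a‖) / (1 - ‖a‖ * r))) 1 := by
      fun_prop (disch := simp [hne])
    simpa [hne] using hcont.tendsto.mono_left nhdsWithin_le_nhds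
  refine ⟨g, hg, fun w hw ↦
    norm_le_of_forall_sphere_norm_le_of_tendsto hg ha hB (fun r ⟨har, hr1⟩ ζ hζ ↦ ?_) hw,
    hfactor⟩
  rw [mem_sphere_zero_iff_norm] at hζ
  have hm : 0 < (r - ‖a‖) / (1 - ‖a‖ * r) :=
    div_pos (by linarith) (by nlinarith [norm_nonneg a])
  rw [le_div_iff₀ hm]
  calc ‖g ζ‖ * ((r - ‖a‖) / (1 - ‖a‖ * r)) ≤ ‖g ζ‖ * ‖blaschkeFactor a ζ‖ :=
        mul_le_mul_of_nonneg_left (div_le_norm_blaschkeFactor_of_norm_eq hζ har hr1.le)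
          (norm_nonneg _)
    _ = ‖f ζ‖ := by
        rw [hfactor ζ (mem_ball_zero_iff.2 (hζ.trans_lt hr1)), norm_mul (blaschkeFactor a ζ),
          mul_comm]
    _ ≤ C := hC ζ (mem_ball_zero_iff.2 (hζ.trans_lt hr1))

theorem norm_le_prod_norm_blaschkeFactor_mul {f : ℂ → ℂ}
    (hf : DifferentiableOn ℂ f (ball 0 1)) {C : ℝ} (hC : ∀ w ∈ ball (0 : ℂ) 1, ‖f w‖ ≤ C)
    {t : Finset ℂ} (ht : ∀ a ∈ t, a ∈ ball (0 : ℂ) 1) (hzero : ∀ a ∈ t, f a = 0)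
    {w : ℂ} (hw : w ∈ ball (0 : ℂ) 1) :
    ‖f w‖ ≤ (∏ a ∈ t, ‖blaschkeFactor a w‖) * C := by
  induction t using Finset.induction_on generalizing f with
  | empty => simpa using hC w hw
  | insert a t hat ih =>
    obtain ⟨g, hg, hgC, hfg⟩ := exists_eq_blaschkeFactor_mul hf hC (ht a (t.mem_insert_self a))
      (hzero a (t.mem_insert_self a))
    have hgzero : ∀ b ∈ t, g b = 0 := fun b hb ↦ by
      have hb1 := ht b (Finset.mem_insert_of_mem hb)
      have hne : blaschkeFactor a b ≠ 0 :=
        blaschkeFactor_ne_zero (mem_ball_zero_iff.1 (ht a (t.mem_insert_self a)))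
          (mem_ball_zero_iff.1 hb1) (ne_of_mem_of_not_mem hb hat)
      simpa [hne, hzero b (Finset.mem_insert_of_mem hb)] using (hfg b hb1).symm
    rw [hfg w hw, norm_mul, Finset.prod_insert hat, mul_assoc]
    exact mul_le_mul_of_nonneg_left
      (ih hg hgC (fun b hb ↦ ht b (Finset.mem_insert_of_mem hb)) hgzero) (norm_nonneg _)

theorem summable_one_sub_norm_of_forall_eq_zero {f : ℂ → ℂ}
    (hf : DifferentiableOn ℂ f (ball 0 1)) {C : ℝ} (hC : ∀ w ∈ ball (0 : ℂ) 1, ‖f w‖ ≤ C)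
    {w₀ : ℂ} (hw₀ : w₀ ∈ ball (0 : ℂ) 1) (hfw₀ : f w₀ ≠ 0) {ι : Type*} {z : ι → ℂ}
    (hz : ∀ i, z i ∈ ball (0 : ℂ) 1) (hinj : Function.Injective z) (hzero : ∀ i, f (z i) = 0) :
    Summable fun i ↦ 1 - ‖z i‖ := by
  have hw₀' := mem_ball_zero_iff.1 hw₀
  have hz' i := mem_ball_zero_iff.1 (hz i)
  have hC0 : 0 < C := (norm_pos_iff.2 hfw₀).trans_le (hC w₀ hw₀)
  have hprod : ∀ u : Finset ι,
      ‖f w₀‖ / C ≤ ∏ i ∈ u, ‖blaschkeFactor (z i) w₀‖ := fun u ↦ by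
    rw [div_le_iff₀ hC0, ← Finset.prod_image (f := fun a ↦ ‖blaschkeFactor a w₀‖) hinj.injOn]
    exact norm_le_prod_norm_blaschkeFactor_mul hf hC (by simpa using fun i _ ↦ hz i)
      (by simpa using fun i _ ↦ hzero i) hw₀
  have hq := summable_one_sub_of_forall_le_prod (fun i ↦ norm_nonneg _)
    (fun i ↦ norm_blaschkeFactor_le_one (hz' i) hw₀') (div_pos (norm_pos_iff.2 hfw₀) hC0) hprod
  have hK : 0 < 1 - ‖w₀‖ ^ 2 := by nlinarith [norm_nonneg w₀]
  refine (hq.mul_left (8 / (1 - ‖w₀‖ ^ 2))).of_nonneg_of_le (fun i ↦ by linarith [hz' i])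
    fun i ↦ ?_
  rw [div_mul_eq_mul_div, le_div_iff₀ hK]
  exact one_sub_norm_mul_le_one_sub_norm_blaschkeFactor (hz' i) hw₀'

end Complex

/-- A c₀-interpolating sequence for H∞ admits a nonzero bounded analytic function vanishing
at all but the first point, hence satisfies the Blaschke condition. -/
theorem c0_interpolating_blaschke
    (z : ℕ → ℂ) (hz : ∀ n, z n ∈ ball (0 : ℂ) 1)
    (h : ∀ a : ℕ → ℂ, Tendsto a atTop (nhds 0) →
      ∃ f : ℂ → ℂ, DifferentiableOn ℂ f (ball (0 : ℂ) 1) ∧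
        (∃ C : ℝ, ∀ w ∈ ball (0 : ℂ) 1, ‖f w‖ ≤ C) ∧
        ∀ n, f (z n) = a n) :
    (∃ f : ℂ → ℂ, DifferentiableOn ℂ f (ball (0 : ℂ) 1) ∧
      (∃ C : ℝ, ∀ w ∈ ball (0 : ℂ) 1, ‖f w‖ ≤ C) ∧
      (∃ w ∈ ball (0 : ℂ) 1, f w ≠ 0) ∧
      ∀ n ≥ 1, f (z n) = 0) ∧
    Summable (fun n => 1 - ‖z n‖) := by
  have hinj : Function.Injective z := by
    obtain ⟨p, -, -, hp⟩ := h (fun n ↦ (2⁻¹ : ℂ) ^ n)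
      (tendsto_pow_atTop_nhds_zero_of_norm_lt_one (by norm_num))
    intro m n hmn
    simpa using congrArg norm ((hp m).symm.trans ((congrArg p hmn).trans (hp n)))
  obtain ⟨f, hf, ⟨C, hC⟩, hfz⟩ := h (Pi.single 0 1)
    ((tendsto_add_atTop_iff_nat 1).1 (by simp))
  have hf0 : f (z 0) ≠ 0 := by simp [hfz]
  have hfn : ∀ n ≥ 1, f (z n) = 0 := fun n hn ↦ by simp [hfz, Nat.one_le_iff_ne_zero.1 hn]
  refine ⟨⟨f, hf, ⟨C, hC⟩, ⟨z 0, hz 0, hf0⟩, hfn⟩, (summable_nat_add_iff 1).1 ?_⟩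
  exact Complex.summable_one_sub_norm_of_forall_eq_zero hf hC (hz 0) hf0 (fun n ↦ hz (n + 1))
    (hinj.comp (add_left_injective 1)) fun n ↦ hfn (n + 1) le_add_self
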